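/- For |q|<1 and parameters in the region of validity, ₂φ₁ satisfies the three-term relation ₂φ₁(aq², bq²; cq²; q, x) = −[(1−cq)(1−c−bx−a(1−b−bq)x) / ((1−aq)(1−bq)(c−abxq)x)] · ₂φ₁(aq, bq; cq; q, x) + [(1−c)(1−cq) / ((1−aq)(1−bq)(c−abxq)x)] · ₂φ₁(a, b; c; q, x). -/

import Mathlib

/-!
Write `F k = ₂φ₁(a q^k, b q^k; c q^k; q, x)`. Clearing denominators, the relation becomes a linear
relation between `F 0`, `F 1`, `x F 1`, `x F 2` and `x² F 2`, checked coefficientwise. The two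
recursions `(a;q)_{n+1} = (a;q)_n (1 - a q^n)` and `(a;q)_{n+1} = (1 - a) (aq;q)_n` express every
coefficient of `x^(m+2)` involved as a rational function of `q^m` times the coefficient of `x^m`
in `F 2`, so each coefficient identity is an identity of rational functions. Convergence for
`|x| < 1` is the ratio test.
-/

open scoped BigOperators

/-- q-shifted factorial (a;q)_j -/
noncomputable def qPoch (a q : ℂ) (j : ℕ) : ℂ :=
  ∏ i ∈ Finset.range j, (1 - a * q ^ i)

/-- infinite q-shifted factorial (a;q)_∞ -/
noncomputable def qPochInf (a q : ℂ) : ℂ :=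
  ∏' j : ℕ, (1 - a * q ^ j)

/-- basic hypergeometric series ₁φ₁(a; c; q, x) -/
noncomputable def phi11 (a c q x : ℂ) : ℂ :=
  ∑' j : ℕ, qPoch a q j / (qPoch q q j * qPoch c q j) *
    (-1) ^ j * q ^ (j * (j - 1) / 2) * x ^ j

/-- basic hypergeometric series ₀φ₁(–; c; q, x) -/
noncomputable def phi01 (c q x : ℂ) : ℂ :=
  ∑' j : ℕ, q ^ (j * (j - 1)) * x ^ j / (qPoch q q j * qPoch c q j)

/-- basic hypergeometric series ₂φ₁(a, b; c; q, x) -/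
noncomputable def phi21 (a b c q x : ℂ) : ℂ :=
  ∑' j : ℕ, qPoch a q j * qPoch b q j / (qPoch q q j * qPoch c q j) * x ^ j

open Filter Topology

lemma qPoch_succ (a q : ℂ) (n : ℕ) :
    qPoch a q (n + 1) = qPoch a q n * (1 - a * q ^ n) :=
  Finset.prod_range_succ _ _

lemma qPoch_succ' (a q : ℂ) (n : ℕ) :
    qPoch a q (n + 1) = (1 - a) * qPoch (a * q) q n := by
  simp only [qPoch, Finset.prod_range_succ', pow_succ, pow_zero, mul_one, mul_assoc, mul_comm]

noncomputable def phi21Coeff (a b c q : ℂ) (n : ℕ) : ℂ :=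
  qPoch a q n * qPoch b q n / (qPoch q q n * qPoch c q n)

lemma phi21Coeff_zero (a b c q : ℂ) : phi21Coeff a b c q 0 = 1 := by
  simp [phi21Coeff, qPoch]

lemma phi21Coeff_succ (a b c q : ℂ) (n : ℕ) :
    phi21Coeff a b c q (n + 1) = phi21Coeff a b c q n *
      ((1 - a * q ^ n) * (1 - b * q ^ n) / ((1 - q ^ (n + 1)) * (1 - c * q ^ n))) := by
  rw [phi21Coeff, phi21Coeff, qPoch_succ a, qPoch_succ b, qPoch_succ c, qPoch_succ q q n,
    pow_succ' q n, div_mul_div_comm]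
  congr 1 <;> ring

lemma phi21Coeff_succ' (a b c q : ℂ) (n : ℕ) :
    phi21Coeff a b c q (n + 1) = (1 - a) * (1 - b) / ((1 - q ^ (n + 1)) * (1 - c)) *
      phi21Coeff (a * q) (b * q) (c * q) q n := by
  rw [phi21Coeff, phi21Coeff, qPoch_succ' a, qPoch_succ' b, qPoch_succ' c, qPoch_succ q q n,
    pow_succ' q n, div_mul_div_comm]
  congr 1 <;> ring

lemma summable_phi21Coeff_mul_pow (a b c : ℂ) {q x : ℂ} (hq : ‖q‖ < 1) (hx : ‖x‖ < 1) :
    Summable fun n => phi21Coeff a b c q n * x ^ n := by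
  have hxr : ‖x‖ < (‖x‖ + 1) / 2 := by linarith
  refine summable_of_ratio_norm_eventually_le (r := (‖x‖ + 1) / 2) (by linarith) ?_
  have hpow : Tendsto (q ^ ·) atTop (𝓝 0) := tendsto_pow_atTop_nhds_zero_of_norm_lt_one hq
  have hratio : Tendsto (fun n => (1 - a * q ^ n) * (1 - b * q ^ n) * x /
      ((1 - q * q ^ n) * (1 - c * q ^ n))) atTop (𝓝 x) := by
    have hcont : ContinuousAt
        (fun t : ℂ => (1 - a * t) * (1 - b * t) * x / ((1 - q * t) * (1 - c * t))) 0 :=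
      ContinuousAt.div (by fun_prop) (by fun_prop) (by norm_num)
    simpa [Function.comp_def] using hcont.tendsto.comp hpow
  filter_upwards [hratio.norm.eventually_lt_const hxr] with n hn
  have hterm : phi21Coeff a b c q (n + 1) * x ^ (n + 1) = phi21Coeff a b c q n * x ^ n *
      ((1 - a * q ^ n) * (1 - b * q ^ n) * x / ((1 - q * q ^ n) * (1 - c * q ^ n))) := by
    rw [phi21Coeff_succ, pow_succ' q n]; ring
  rw [hterm, norm_mul, mul_comm]
  exact mul_le_mul_of_nonneg_right hn.le (norm_nonneg _)

lemma hasSum_phi21 (a b c : ℂ) {q x : ℂ} (hq : ‖q‖ < 1) (hx : ‖x‖ < 1) :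
    HasSum (fun n => phi21Coeff a b c q n * x ^ n) (phi21 a b c q x) :=
  (summable_phi21Coeff_mul_pow a b c hq hx).hasSum

def coeffShift {R : Type*} [Zero R] (f : ℕ → R) : ℕ → R
  | 0 => 0
  | n + 1 => f n

lemma HasSum.coeffShift_mul_pow {R : Type*} [CommRing R] [TopologicalSpace R]
    [IsTopologicalRing R] {f : ℕ → R} {x S : R} (h : HasSum (fun n => f n * x ^ n) S) :
    HasSum (fun n => coeffShift f n * x ^ n) (x * S) := by
  have hshift : HasSum (fun n => coeffShift f (n + 1) * x ^ (n + 1)) (x * S) := by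
    refine (h.mul_left x).congr_fun fun n => ?_
    show f n * x ^ (n + 1) = x * (f n * x ^ n)
    ring
  have h0 := (hasSum_nat_add_iff (f := fun n => coeffShift f n * x ^ n) 1).mp hshift
  rwa [Finset.sum_range_one, show coeffShift f 0 = 0 from rfl, zero_mul, add_zero] at h0

lemma phi21Coeff_contiguous (a b : ℂ) {c q : ℂ} (hq : ∀ n : ℕ, q ^ (n + 1) ≠ 1)
    (hc : ∀ n : ℕ, c * q ^ n ≠ 1) (n : ℕ) :
    c * (1 - a * q) * (1 - b * q) *
          coeffShift (phi21Coeff (a * q ^ 2) (b * q ^ 2) (c * q ^ 2) q) n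
      - a * b * q * (1 - a * q) * (1 - b * q) *
          coeffShift (coeffShift (phi21Coeff (a * q ^ 2) (b * q ^ 2) (c * q ^ 2) q)) n
      + (1 - c) * (1 - c * q) * (phi21Coeff (a * q) (b * q) (c * q) q n - phi21Coeff a b c q n)
      - (1 - c * q) * (a + b - a * b - a * b * q) *
          coeffShift (phi21Coeff (a * q) (b * q) (c * q) q) n = 0 := by
  have hq' (n : ℕ) : 1 - q ^ (n + 1) ≠ 0 := sub_ne_zero.2 (hq n).symm
  have hc' (n : ℕ) : 1 - c * q ^ n ≠ 0 := sub_ne_zero.2 (hc n).symm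
  have hc0 : 1 - c ≠ 0 := by simpa using hc' 0
  have hc1 : 1 - c * q ≠ 0 := by simpa using hc' 1
  rcases n with _ | _ | m
  · simp only [coeffShift, phi21Coeff_zero]; ring
  · simp only [coeffShift, zero_add, phi21Coeff_succ _ _ _ q 0, phi21Coeff_zero]
    have : 1 - q ≠ 0 := by simpa using hq' 0
    field_simp
    ring
  · have h1 : phi21Coeff (a * q) (b * q) (c * q) q (m + 1) =
        (1 - a * q) * (1 - b * q) / ((1 - q ^ (m + 1)) * (1 - c * q)) *
          phi21Coeff (a * q ^ 2) (b * q ^ 2) (c * q ^ 2) q m := by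
      rw [phi21Coeff_succ', mul_assoc a, mul_assoc b, mul_assoc c, ← sq]
    simp only [coeffShift]
    rw [phi21Coeff_succ' a b c q (m + 1), phi21Coeff_succ (a * q) (b * q) (c * q) q (m + 1), h1,
      phi21Coeff_succ (a * q ^ 2) (b * q ^ 2) (c * q ^ 2) q m]
    generalize phi21Coeff (a * q ^ 2) (b * q ^ 2) (c * q ^ 2) q m = R
    have := hq' (m + 1)
    have := hq' m
    have : 1 - c * q * q ^ (m + 1) ≠ 0 := by rw [mul_assoc, ← pow_succ']; exact hc' (m + 2)
    have : 1 - c * q ^ 2 * q ^ m ≠ 0 := by rw [mul_assoc, ← pow_add, add_comm]; exact hc' (m + 2)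
    field_simp
    ring

theorem phi21_three_term_relation (q a b c x : ℂ) (hq : ‖q‖ < 1) (hx : ‖x‖ < 1)
    (hc : ∀ n : ℕ, c * q ^ n ≠ 1)
    (ha : a * q ≠ 1) (hb : b * q ≠ 1) (hx0 : x ≠ 0) (hcx : c ≠ a * b * x * q) :
    phi21 (a * q ^ 2) (b * q ^ 2) (c * q ^ 2) q x
      = -((1 - c * q) * (1 - c - b * x - a * (1 - b - b * q) * x)
            / ((1 - a * q) * (1 - b * q) * (c - a * b * x * q) * x))
          * phi21 (a * q) (b * q) (c * q) q x
        + (1 - c) * (1 - c * q) / ((1 - a * q) * (1 - b * q) * (c - a * b * x * q) * x)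
          * phi21 a b c q x := by
  have hq' (n : ℕ) : q ^ (n + 1) ≠ 1 :=
    ne_of_apply_ne norm (by simpa using (pow_lt_one₀ (norm_nonneg q) hq n.succ_ne_zero).ne)
  have H2 := hasSum_phi21 (a * q ^ 2) (b * q ^ 2) (c * q ^ 2) hq hx
  have H1 := hasSum_phi21 (a * q) (b * q) (c * q) hq hx
  have H0 := hasSum_phi21 a b c hq hx
  have hrel := ((((H2.coeffShift_mul_pow.mul_left (c * (1 - a * q) * (1 - b * q))).sub
      (H2.coeffShift_mul_pow.coeffShift_mul_pow.mul_left
        (a * b * q * (1 - a * q) * (1 - b * q)))).add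
      ((H1.sub H0).mul_left ((1 - c) * (1 - c * q)))).sub
      (H1.coeffShift_mul_pow.mul_left ((1 - c * q) * (a + b - a * b - a * b * q)))).unique
    (hasSum_zero.congr_fun fun n => by
      linear_combination x ^ n * phi21Coeff_contiguous a b hq' hc n)
  have hD : (1 - a * q) * (1 - b * q) * (c - a * b * x * q) * x ≠ 0 := by
    have := sub_ne_zero.2 ha.symm
    have := sub_ne_zero.2 hb.symm
    have := sub_ne_zero.2 hcx
    positivity
  rw [neg_mul, div_mul_eq_mul_div, div_mul_eq_mul_div, ← neg_div, ← add_div, eq_div_iff hD]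
  linear_combination hrel
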